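/- For each ε > 0 and integer k ≥ 1 there exists δ > 0 with the following two properties. (i) For every P-variable W and every μ ∈ S_k(W) with d_LP(μ, M_k) ≤ δ, there exists μ₂ ∈ S'_k(W) with d_LP(μ,μ₂) ≤ ε. (ii) For any two P-variables W and U with d_H(S_k(W), S_k(U)) ≤ δ/2, one has d_H(S'_k(W), S'_k(U)) ≤ 2ε + d_H(S_k(W), S_k(U)). -/

import Mathlib

set_option autoImplicit false

open MeasureTheory Set
open scoped ENNReal NNReal

noncomputable section

/-- `ℝ^n` with the Euclidean metric. -/
abbrev RE (n : ℕ) : Type := EuclideanSpace ℝ (Fin n)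

/-- The random vector `(f₁(x₁), f₁(x₂), …, f_k(x₁), f_k(x₂), W(x₁,x₂,x₁₂))`. -/
def sVec {Ω₁ Ω₂ : Type*} (k : ℕ) (f : Fin k → Ω₁ → ℝ)
    (W : Ω₁ × Ω₁ × Ω₂ → ℝ) (x : Ω₁ × Ω₁ × Ω₂) : RE (2 * k + 1) :=
  (WithLp.equiv 2 (Fin (2 * k + 1) → ℝ)).symm fun i =>
    if _ : (i : ℕ) < 2 * k then
      if (i : ℕ) % 2 = 0 then f ⟨(i : ℕ) / 2, by omega⟩ x.1
      else f ⟨(i : ℕ) / 2, by omega⟩ x.2.1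
    else W x

/-- `S(f₁,…,f_k,W)`: the pushforward of the product measure `P₁ ⊗ P₁ ⊗ P₂` under `sVec`. -/
def Smeasure {Ω₁ Ω₂ : Type*} [MeasurableSpace Ω₁] [MeasurableSpace Ω₂]
    (P₁ : Measure Ω₁) (P₂ : Measure Ω₂) {k : ℕ} (f : Fin k → Ω₁ → ℝ)
    (W : Ω₁ × Ω₁ × Ω₂ → ℝ) : Measure (RE (2 * k + 1)) :=
  (P₁.prod (P₁.prod P₂)).map (sVec k f W)

/-- The `k`-profile `S_k(W)`. -/
def SkSet {Ω₁ Ω₂ : Type*} [MeasurableSpace Ω₁] [MeasurableSpace Ω₂]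
    (P₁ : Measure Ω₁) (P₂ : Measure Ω₂) (k : ℕ)
    (W : Ω₁ × Ω₁ × Ω₂ → ℝ) : Set (Measure (RE (2 * k + 1))) :=
  {μ | ∃ f : Fin k → Ω₁ → ℝ, (∀ i, Measurable (f i)) ∧
    (∀ i x, f i x ∈ Icc (-1 : ℝ) 1) ∧ μ = Smeasure P₁ P₂ f W}

/-- A function partition: `{0,1}`-valued measurable functions summing to `1`. -/
def IsFunctionPartition {Ω₁ : Type*} [MeasurableSpace Ω₁] {k : ℕ}
    (f : Fin k → Ω₁ → ℝ) : Prop :=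
  (∀ i, Measurable (f i)) ∧ (∀ i x, f i x = 0 ∨ f i x = 1) ∧ ∀ x, ∑ i, f i x = 1

/-- The restricted `k`-profile `S'_k(W)`. -/
def SkSet' {Ω₁ Ω₂ : Type*} [MeasurableSpace Ω₁] [MeasurableSpace Ω₂]
    (P₁ : Measure Ω₁) (P₂ : Measure Ω₂) (k : ℕ)
    (W : Ω₁ × Ω₁ × Ω₂ → ℝ) : Set (Measure (RE (2 * k + 1))) :=
  {μ | ∃ f : Fin k → Ω₁ → ℝ, IsFunctionPartition f ∧ μ = Smeasure P₁ P₂ f W}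

/-- Hausdorff edistance (w.r.t. the Lévy–Prokhorov distance) between sets of measures. -/
def eHausLP {X : Type*} [MeasurableSpace X] [PseudoEMetricSpace X]
    (A B : Set (Measure X)) : ℝ≥0∞ :=
  max (⨆ μ ∈ A, ⨅ ν ∈ B, levyProkhorovEDist μ ν)
      (⨆ ν ∈ B, ⨅ μ ∈ A, levyProkhorovEDist μ ν)

/-- Hausdorff distance (w.r.t. the Lévy–Prokhorov distance) between sets of measures. -/
def dHLP {X : Type*} [MeasurableSpace X] [PseudoEMetricSpace X]
    (A B : Set (Measure X)) : ℝ := (eHausLP A B).toReal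

/-- A `P`-variable: a measurable real-valued function on a product `Ω₁ × Ω₁ × Ω₂`
of probability spaces. -/
structure PVar where
  (Ω₁ : Type*)
  (Ω₂ : Type*)
  [m₁ : MeasurableSpace Ω₁]
  [m₂ : MeasurableSpace Ω₂]
  (P₁ : Measure Ω₁)
  (P₂ : Measure Ω₂)
  (prob₁ : IsProbabilityMeasure P₁)
  (prob₂ : IsProbabilityMeasure P₂)
  (W : Ω₁ × Ω₁ × Ω₂ → ℝ)
  (meas : Measurable W)

attribute [instance] PVar.m₁ PVar.m₂

/-- The underlying product probability measure of a `P`-variable. -/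
def PVar.vol (V : PVar) : Measure (V.Ω₁ × V.Ω₁ × V.Ω₂) := V.P₁.prod (V.P₁.prod V.P₂)

/-- The `k`-profile of a `P`-variable. -/
def PVar.Sk (V : PVar) (k : ℕ) : Set (Measure (RE (2 * k + 1))) := SkSet V.P₁ V.P₂ k V.W

/-- The restricted `k`-profile of a `P`-variable. -/
def PVar.Sk' (V : PVar) (k : ℕ) : Set (Measure (RE (2 * k + 1))) := SkSet' V.P₁ V.P₂ k V.W

/-- The `P`-variables metric `d_M`. -/
def dM (V U : PVar) : ℝ :=
  ∑' k : ℕ, (2 : ℝ)⁻¹ ^ (k + 1) * dHLP (V.Sk (k + 1)) (U.Sk (k + 1))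

/-- Projection of `ℝ^{2k+1}` onto the even coordinates (positions `2, 4, …, 2k`). -/
def evenProj (k : ℕ) (x : RE (2 * k + 1)) : RE k :=
  (WithLp.equiv 2 (Fin k → ℝ)).symm fun i => x ⟨2 * (i : ℕ) + 1, by omega⟩

/-- `M_k`: probability measures on `ℝ^{2k+1}` whose marginal on the even coordinates
is supported on the standard basis vectors `e₁, …, e_k` of `ℝ^k`. -/
def Mk (k : ℕ) : Set (Measure (RE (2 * k + 1))) :=
  {μ | IsProbabilityMeasure μ ∧
    μ.map (evenProj k) {y : RE k | ∀ i : Fin k, y ≠ EuclideanSpace.single i 1} = 0}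

universe u₁ u₂ u₃ u₄

/-! Given `μ = S(f, W)` within `δ` of `M_k`, round the vector `(f_i(y))_i` measurably to a
standard basis vector within distance `2δ` of it. The even marginal of `μ` is the law of
`(f_i(x₂))_i` and measures in `M_k` put no mass off the basis vectors, so rounding fails only on
a set of `P₁`-measure at most `2δ`; outside the event that `x₁` or `x₂` falls there, the sample
of `μ` moves by at most `√(2k+1) · 2δ`, and this coupling bounds the Lévy–Prokhorov distance.
For (ii), a point of `S'_k(W)` lies in `M_k`, so its `δ`-neighbour in `S_k(U)` is `δ`-close to
`M_k` and rounds into `S'_k(U)`. -/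

attribute [instance] PVar.prob₁ PVar.prob₂

section Selector

variable {Ω : Type*} [MeasurableSpace Ω]

theorem exists_measurable_fin_selector {k : ℕ} (hk : 0 < k) {A : Fin k → Set Ω}
    (hA : ∀ i, MeasurableSet (A i)) :
    ∃ h : Ω → Fin k, Measurable h ∧ ∀ y i, y ∈ A i → y ∈ A (h y) := by
  classical
  let p : Ω → ℕ → Prop := fun y n => ∃ hn : n < k, y ∈ A ⟨n, hn⟩
  have hp : ∀ n, MeasurableSet {y | p y n} := fun n => by
    by_cases hn : n < k
    · simpa [p, hn] using hA ⟨n, hn⟩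
    · simp [p, hn]
  let N : Ω → ℕ := fun y => Nat.findGreatest (p y) (k - 1)
  have hN : Measurable N := measurable_findGreatest fun n _ => hp n
  have hNk : ∀ y, N y < k := fun y => (Nat.findGreatest_le _).trans_lt (by omega)
  refine ⟨fun y => ⟨N y, hNk y⟩, measurable_to_countable' fun i => ?_, fun y i hy => ?_⟩
  · convert hN (measurableSet_singleton (i : ℕ)) using 1
    ext y
    simp [Fin.ext_iff]
  · exact (Nat.findGreatest_spec (P := p y) (m := i) (n := k - 1) (by omega) ⟨i.2, hy⟩).2

end Selector

theorem EuclideanSpace.dist_le_sqrt_card_mul {ι : Type*} [Fintype ι]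
    {x y : EuclideanSpace ℝ ι} {r : ℝ} (hr : 0 ≤ r) (h : ∀ i, dist (x i) (y i) ≤ r) :
    dist x y ≤ √(Fintype.card ι) * r := by
  rw [EuclideanSpace.dist_eq, ← Real.sqrt_sq hr, ← Real.sqrt_mul (Nat.cast_nonneg _)]
  gcongr
  calc ∑ i, dist (x i) (y i) ^ 2 ≤ ∑ _i : ι, r ^ 2 :=
        Finset.sum_le_sum fun i _ => pow_le_pow_left₀ dist_nonneg (h i) 2
    _ = _ := by simp

section Profiles

variable {Ω₁ Ω₂ : Type*} {k : ℕ}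

theorem dist_evenProj_le (x y : RE (2 * k + 1)) :
    dist (evenProj k x) (evenProj k y) ≤ dist x y := by
  let e : Fin k ↪ Fin (2 * k + 1) :=
    ⟨fun i => ⟨2 * i + 1, by omega⟩, fun i j hij => by simpa [Fin.ext_iff] using hij⟩
  rw [EuclideanSpace.dist_eq, EuclideanSpace.dist_eq]
  gcongr
  calc ∑ i, dist (evenProj k x i) (evenProj k y i) ^ 2
      = ∑ j ∈ Finset.univ.map e, dist (x j) (y j) ^ 2 := by rw [Finset.sum_map]; rfl
    _ ≤ ∑ j, dist (x j) (y j) ^ 2 :=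
      Finset.sum_le_sum_of_subset_of_nonneg (Finset.subset_univ _) fun _ _ _ => sq_nonneg _

theorem measurable_evenProj : Measurable (evenProj k) :=
  (LipschitzWith.of_dist_le_mul (K := 1) fun x y => by
    simpa using dist_evenProj_le x y).continuous.measurable

theorem measurable_sVec [MeasurableSpace Ω₁] [MeasurableSpace Ω₂] {f : Fin k → Ω₁ → ℝ}
    {W : Ω₁ × Ω₁ × Ω₂ → ℝ} (hf : ∀ i, Measurable (f i)) (hW : Measurable W) :
    Measurable (sVec k f W) := by
  refine (WithLp.measurable_toLp 2 _).comp (measurable_pi_lambda _ fun i => ?_)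
  by_cases hi : (i : ℕ) < 2 * k
  · by_cases hpar : (i : ℕ) % 2 = 0
    · simp only [dif_pos hi, if_pos hpar]
      exact (hf _).comp measurable_fst
    · simp only [dif_pos hi, if_neg hpar]
      exact (hf _).comp (measurable_fst.comp measurable_snd)
  · simpa only [dif_neg hi] using hW

theorem evenProj_sVec (f : Fin k → Ω₁ → ℝ) (W : Ω₁ × Ω₁ × Ω₂ → ℝ) (x : Ω₁ × Ω₁ × Ω₂) :
    evenProj k (sVec k f W x) = WithLp.toLp 2 fun i => f i x.2.1 := by
  ext i
  have hi : (2 * (i : ℕ) + 1) / 2 = i := by omega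
  simp [evenProj, sVec, show 2 * (i : ℕ) + 1 < 2 * k by omega, Nat.add_mod, hi]

theorem dist_sVec_le {f g : Fin k → Ω₁ → ℝ} (W : Ω₁ × Ω₁ × Ω₂ → ℝ) {x : Ω₁ × Ω₁ × Ω₂}
    {r : ℝ} (hr : 0 ≤ r) (h₁ : ∀ i, dist (f i x.1) (g i x.1) ≤ r)
    (h₂ : ∀ i, dist (f i x.2.1) (g i x.2.1) ≤ r) :
    dist (sVec k f W x) (sVec k g W x) ≤ √(2 * k + 1) * r := by
  have := EuclideanSpace.dist_le_sqrt_card_mul (x := sVec k f W x) (y := sVec k g W x) hr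
    fun j => by
      by_cases hj : (j : ℕ) < 2 * k
      · by_cases hpar : (j : ℕ) % 2 = 0
        · simpa [sVec, hj, hpar] using h₁ _
        · simpa [sVec, hj, hpar] using h₂ _
      · simpa [sVec, hj] using hr
  simpa using this

end Profiles

section Measures

variable {Ω₁ Ω₂ : Type*} [MeasurableSpace Ω₁] [MeasurableSpace Ω₂]
  {P₁ : Measure Ω₁} {P₂ : Measure Ω₂} [IsProbabilityMeasure P₁] [IsProbabilityMeasure P₂]

theorem measurePreserving_fst_snd :
    MeasurePreserving (fun x : Ω₁ × Ω₁ × Ω₂ => x.2.1) (P₁.prod (P₁.prod P₂)) P₁ :=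
  measurePreserving_fst.comp measurePreserving_snd

theorem measure_fst_mem_or_fst_snd_mem_le {s : Set Ω₁} (hs : MeasurableSet s) :
    P₁.prod (P₁.prod P₂) {x | x.1 ∈ s ∨ x.2.1 ∈ s} ≤ 2 * P₁ s := by
  calc P₁.prod (P₁.prod P₂) {x | x.1 ∈ s ∨ x.2.1 ∈ s}
      ≤ P₁.prod (P₁.prod P₂) (Prod.fst ⁻¹' s)
        + P₁.prod (P₁.prod P₂) ((fun x : Ω₁ × Ω₁ × Ω₂ => x.2.1) ⁻¹' s) :=
      measure_union_le _ _
    _ = 2 * P₁ s := by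
      rw [measurePreserving_fst.measure_preimage hs.nullMeasurableSet,
        measurePreserving_fst_snd.measure_preimage hs.nullMeasurableSet, two_mul]

theorem map_evenProj_smeasure {k : ℕ} {f : Fin k → Ω₁ → ℝ} {W : Ω₁ × Ω₁ × Ω₂ → ℝ}
    (hf : ∀ i, Measurable (f i)) (hW : Measurable W) :
    (Smeasure P₁ P₂ f W).map (evenProj k) = P₁.map fun y => WithLp.toLp 2 fun i => f i y := by
  have hF : Measurable fun y => WithLp.toLp 2 fun i => f i y := by fun_prop
  have hπ := measurePreserving_fst_snd (P₁ := P₁) (P₂ := P₂)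
  rw [Smeasure, Measure.map_map measurable_evenProj (measurable_sVec hf hW)]
  conv_rhs => rw [← hπ.map_eq, Measure.map_map hF hπ.measurable]
  congr 1
  ext x : 1
  exact evenProj_sVec f W x

theorem isProbabilityMeasure_smeasure {k : ℕ} {f : Fin k → Ω₁ → ℝ} {W : Ω₁ × Ω₁ × Ω₂ → ℝ}
    (hf : ∀ i, Measurable (f i)) (hW : Measurable W) :
    IsProbabilityMeasure (Smeasure P₁ P₂ f W) :=
  Measure.isProbabilityMeasure_map (measurable_sVec hf hW).aemeasurable

end Measures

theorem levyProkhorovEDist_map_le_of_measure_lt_dist_le {α E : Type*} [MeasurableSpace α]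
    [PseudoMetricSpace E] [MeasurableSpace E] [OpensMeasurableSpace E]
    {P : Measure α} [IsProbabilityMeasure P] {X Y : α → E} (hX : Measurable X)
    (hY : Measurable Y) {c : ℝ} (hc : 0 ≤ c)
    (h : P {a | c < dist (X a) (Y a)} ≤ ENNReal.ofReal c) :
    levyProkhorovEDist (P.map X) (P.map Y) ≤ ENNReal.ofReal c := by
  have := Measure.isProbabilityMeasure_map (μ := P) hX.aemeasurable
  have := Measure.isProbabilityMeasure_map (μ := P) hY.aemeasurable
  refine levyProkhorovEDist_le_of_forall_le _ _ _ fun ε B hcε hε hB => ?_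
  have hcε' : c < ε.toReal := (ENNReal.ofReal_lt_iff_lt_toReal hc hε.ne).1 hcε
  have hsub : X ⁻¹' B ⊆ Y ⁻¹' Metric.thickening ε.toReal B ∪ {a | c < dist (X a) (Y a)} := by
    intro a ha
    rcases le_or_gt (dist (X a) (Y a)) c with hd | hd
    · exact Or.inl <| Metric.mem_thickening_iff.2 ⟨X a, ha, by rw [dist_comm]; linarith⟩
    · exact Or.inr hd
  rw [Measure.map_apply hX hB, Measure.map_apply hY Metric.isOpen_thickening.measurableSet]
  calc P (X ⁻¹' B) ≤ P (Y ⁻¹' Metric.thickening ε.toReal B) + ENNReal.ofReal c :=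
        (measure_mono hsub).trans <| (measure_union_le _ _).trans (by gcongr)
    _ ≤ _ := by gcongr

section Mk

variable {k : ℕ}

theorem measurableSet_ne_single :
    MeasurableSet {y : RE k | ∀ i, y ≠ EuclideanSpace.single i 1} := by
  simp only [ofPred_forall]
  exact MeasurableSet.iInter fun i => (measurableSet_singleton _).compl

def farFromBasis (k : ℕ) (a : ℝ) : Set (RE k) :=
  {y | ∀ i, a ≤ dist y (EuclideanSpace.single i 1)}

theorem isClosed_farFromBasis (a : ℝ) : IsClosed (farFromBasis k a) := by
  simp only [farFromBasis, ofPred_forall]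
  exact isClosed_iInter fun i => isClosed_le continuous_const (continuous_id.dist continuous_const)

theorem measure_preimage_evenProj_farFromBasis_le {μ ν : Measure (RE (2 * k + 1))}
    (hν : ν ∈ Mk k) {a : ℝ} (ha : 0 ≤ a) (h : levyProkhorovEDist μ ν < ENNReal.ofReal a) :
    μ (evenProj k ⁻¹' farFromBasis k a) ≤ ENNReal.ofReal a := by
  have hν₀ : ν (evenProj k ⁻¹' {y | ∀ i, y ≠ EuclideanSpace.single i 1}) = 0 := by
    rw [← Measure.map_apply measurable_evenProj measurableSet_ne_single, hν.2]
  have hnull : ν (Metric.thickening a (evenProj k ⁻¹' farFromBasis k a)) = 0 := by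
    refine measure_mono_null (fun z hz => ?_) hν₀
    intro i hi
    obtain ⟨z', hz', hzz'⟩ := Metric.mem_thickening_iff.1 hz
    have hfar : a ≤ dist (evenProj k z') (evenProj k z) := hi ▸ hz' i
    linarith [dist_evenProj_le z' z, dist_comm z z']
  have := left_measure_le_of_levyProkhorovEDist_lt h
    ((isClosed_farFromBasis a).measurableSet.preimage measurable_evenProj)
  rwa [ENNReal.toReal_ofReal ha, hnull, zero_add] at this

theorem IsFunctionPartition.exists_toLp_eq_single {Ω : Type*} [MeasurableSpace Ω]
    {f : Fin k → Ω → ℝ} (hf : IsFunctionPartition f) (y : Ω) :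
    ∃ i, WithLp.toLp 2 (fun j => f j y) = EuclideanSpace.single i 1 := by
  obtain ⟨-, h01, hsum⟩ := hf
  have hnonneg : ∀ j, 0 ≤ f j y := fun j => by rcases h01 j y with h | h <;> simp [h]
  obtain ⟨i, hi⟩ : ∃ i, f i y = 1 := by
    by_contra! h
    have : ∑ j, f j y = 0 := Finset.sum_eq_zero fun j _ => (h01 j y).resolve_right (h j)
    linarith [hsum y]
  have hrest : ∑ j ∈ Finset.univ.erase i, f j y = 0 := by
    linarith [Finset.add_sum_erase Finset.univ (f · y) (Finset.mem_univ i), hsum y]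
  refine ⟨i, ?_⟩
  ext j
  by_cases hj : j = i
  · simp [hj, hi]
  · have := (Finset.sum_eq_zero_iff_of_nonneg fun j _ => hnonneg j).1 hrest j
      (Finset.mem_erase.2 ⟨hj, Finset.mem_univ j⟩)
    simp [hj, this]

theorem smeasure_mem_Mk {Ω₁ Ω₂ : Type*} [MeasurableSpace Ω₁] [MeasurableSpace Ω₂]
    {P₁ : Measure Ω₁} {P₂ : Measure Ω₂} [IsProbabilityMeasure P₁] [IsProbabilityMeasure P₂]
    {f : Fin k → Ω₁ → ℝ} (hf : IsFunctionPartition f) {W : Ω₁ × Ω₁ × Ω₂ → ℝ}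
    (hW : Measurable W) : Smeasure P₁ P₂ f W ∈ Mk k := by
  refine ⟨isProbabilityMeasure_smeasure hf.1 hW, ?_⟩
  have hmeas := hf.1
  rw [map_evenProj_smeasure hf.1 hW, Measure.map_apply (by fun_prop) measurableSet_ne_single]
  convert measure_empty (μ := P₁)
  ext y
  simpa using hf.exists_toLp_eq_single y

theorem isFunctionPartition_single {Ω : Type*} [MeasurableSpace Ω] {h : Ω → Fin k}
    (hh : Measurable h) :
    IsFunctionPartition fun i y => (EuclideanSpace.single (h y) (1 : ℝ) : RE k) i := by
  refine ⟨fun i => (measurable_from_top (f := fun j : Fin k =>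
    (EuclideanSpace.single j (1 : ℝ) : RE k) i)).comp hh, fun i y => ?_, fun y => by simp⟩
  by_cases hi : i = h y <;> simp [hi]

end Mk

section Rounding

variable {Ω₁ Ω₂ : Type*} [MeasurableSpace Ω₁] [MeasurableSpace Ω₂]
  {P₁ : Measure Ω₁} {P₂ : Measure Ω₂} [IsProbabilityMeasure P₁] [IsProbabilityMeasure P₂]
  {k : ℕ} {f : Fin k → Ω₁ → ℝ} {W : Ω₁ × Ω₁ × Ω₂ → ℝ}

theorem measure_preimage_farFromBasis_le (hf : ∀ i, Measurable (f i)) (hW : Measurable W)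
    {δ : ℝ} (hδ : 0 < δ)
    (hclose : ⨅ ν ∈ Mk k, levyProkhorovEDist (Smeasure P₁ P₂ f W) ν ≤ ENNReal.ofReal δ) :
    P₁ ((fun y => WithLp.toLp 2 fun i => f i y) ⁻¹' farFromBasis k (2 * δ))
      ≤ ENNReal.ofReal (2 * δ) := by
  obtain ⟨ν, hν, hlt⟩ : ∃ ν ∈ Mk k,
      levyProkhorovEDist (Smeasure P₁ P₂ f W) ν < ENNReal.ofReal (2 * δ) := by
    have := hclose.trans_lt
      ((ENNReal.ofReal_lt_ofReal_iff (by positivity : 0 < 2 * δ)).2 (by linarith : δ < 2 * δ))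
    simpa only [iInf_lt_iff, exists_prop] using this
  have hfar := (isClosed_farFromBasis (k := k) (2 * δ)).measurableSet
  rw [← Measure.map_apply (by fun_prop) hfar, ← map_evenProj_smeasure (P₂ := P₂) hf hW,
    Measure.map_apply measurable_evenProj hfar]
  exact measure_preimage_evenProj_farFromBasis_le hν (by positivity) hlt

theorem exists_isFunctionPartition_levyProkhorovEDist_le (hk : 0 < k)
    (hf : ∀ i, Measurable (f i)) (hW : Measurable W) {δ : ℝ} (hδ : 0 < δ)
    (hclose : ⨅ ν ∈ Mk k, levyProkhorovEDist (Smeasure P₁ P₂ f W) ν ≤ ENNReal.ofReal δ) :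
    ∃ g, IsFunctionPartition g ∧ levyProkhorovEDist (Smeasure P₁ P₂ f W) (Smeasure P₁ P₂ g W)
      ≤ ENNReal.ofReal (4 * (k + 1) * δ) := by
  set F : Ω₁ → RE k := fun y => WithLp.toLp 2 fun i => f i y
  have hF : Measurable F := by fun_prop
  set bad := F ⁻¹' farFromBasis k (2 * δ)
  obtain ⟨h, hh, hsel⟩ := exists_measurable_fin_selector hk
    (A := fun i => {y | dist (F y) (EuclideanSpace.single i 1) < 2 * δ})
    fun i => measurableSet_lt (hF.dist measurable_const) measurable_const
  set g : Fin k → Ω₁ → ℝ := fun i y => (EuclideanSpace.single (h y) (1 : ℝ) : RE k) i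
  have hg : IsFunctionPartition g := isFunctionPartition_single hh
  have hfg : ∀ y ∉ bad, ∀ i, dist (f i y) (g i y) ≤ 2 * δ := by
    intro y hy i
    obtain ⟨j, hj⟩ : ∃ j, dist (F y) (EuclideanSpace.single j 1) < 2 * δ := by
      simpa [bad, farFromBasis] using hy
    exact (PiLp.dist_apply_le (F y) _ i).trans (hsel y j hj).le
  have hsqrt : √(2 * k + 1) * (2 * δ) ≤ 4 * (k + 1) * δ := by
    have : √(2 * k + 1) ≤ 2 * k + 2 :=
      Real.sqrt_le_iff.2 ⟨by positivity, by nlinarith [(Nat.cast_nonneg k : (0 : ℝ) ≤ k)]⟩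
    nlinarith
  refine ⟨g, hg, levyProkhorovEDist_map_le_of_measure_lt_dist_le (measurable_sVec hf hW)
    (measurable_sVec hg.1 hW) (by positivity) ?_⟩
  calc P₁.prod (P₁.prod P₂) {x | 4 * (k + 1) * δ < dist (sVec k f W x) (sVec k g W x)}
      ≤ P₁.prod (P₁.prod P₂) {x | x.1 ∈ bad ∨ x.2.1 ∈ bad} := by
        refine measure_mono fun x hx => ?_
        rw [mem_ofPred_eq]
        by_contra! hgood
        have := dist_sVec_le W (by positivity) (hfg _ hgood.1) (hfg _ hgood.2)
        exact (lt_irrefl _) (hx.trans_le (this.trans hsqrt))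
    _ ≤ 2 * P₁ bad :=
        measure_fst_mem_or_fst_snd_mem_le ((isClosed_farFromBasis _).measurableSet.preimage hF)
    _ ≤ 2 * ENNReal.ofReal (2 * δ) := by
        gcongr
        exact measure_preimage_farFromBasis_le hf hW hδ hclose
    _ ≤ ENNReal.ofReal (4 * (k + 1) * δ) := by
        rw [← ENNReal.ofReal_ofNat 2, ← ENNReal.ofReal_mul (by norm_num)]
        exact ENNReal.ofReal_le_ofReal (by nlinarith)

end Rounding

section Hausdorff

variable {X : Type*} [MeasurableSpace X] [PseudoEMetricSpace X]

theorem eHausLP_le_one {A B : Set (Measure X)} (hA : ∀ μ ∈ A, IsProbabilityMeasure μ)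
    (hB : ∀ ν ∈ B, IsProbabilityMeasure ν) (hA₀ : A.Nonempty) (hB₀ : B.Nonempty) :
    eHausLP A B ≤ 1 := by
  have hLP : ∀ μ ∈ A, ∀ ν ∈ B, levyProkhorovEDist μ ν ≤ 1 := fun μ hμ ν hν => by
    have := hA μ hμ
    have := hB ν hν
    simpa using levyProkhorovEDist_le_max_measure_univ μ ν
  refine max_le (iSup₂_le fun μ hμ => ?_) (iSup₂_le fun ν hν => ?_)
  · exact iInf₂_le_of_le _ hB₀.some_mem (hLP μ hμ _ hB₀.some_mem)
  · exact iInf₂_le_of_le _ hA₀.some_mem (hLP _ hA₀.some_mem ν hν)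

variable [OpensMeasurableSpace X] {A A' B B' M : Set (Measure X)} {a b : ℝ≥0∞}

theorem iSup_iInf_levyProkhorovEDist_le_of_rounding (hA' : A' ⊆ A ∩ M)
    (hB : ∀ ν ∈ B, ⨅ ρ ∈ M, levyProkhorovEDist ν ρ ≤ a →
      ∃ ν' ∈ B', levyProkhorovEDist ν ν' ≤ b)
    (hAB : ⨆ μ ∈ A, ⨅ ν ∈ B, levyProkhorovEDist μ ν < a) :
    ⨆ μ ∈ A', ⨅ ν ∈ B', levyProkhorovEDist μ ν ≤ a + b := by
  refine iSup₂_le fun μ hμ => ?_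
  obtain ⟨ν, hν, hμν⟩ : ∃ ν ∈ B, levyProkhorovEDist μ ν < a := by
    have := (le_iSup₂ (f := fun μ (_ : μ ∈ A) => ⨅ ν ∈ B, levyProkhorovEDist μ ν) μ
      (hA' hμ).1).trans_lt hAB
    simpa only [iInf_lt_iff, exists_prop] using this
  obtain ⟨ν', hν', hνν'⟩ := hB ν hν <|
    iInf₂_le_of_le μ (hA' hμ).2 (levyProkhorovEDist_comm ν μ ▸ hμν.le)
  exact iInf₂_le_of_le ν' hν' <|
    (levyProkhorovEDist_triangle μ ν ν').trans (add_le_add hμν.le hνν')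

theorem eHausLP_le_of_rounding (hA' : A' ⊆ A ∩ M) (hB' : B' ⊆ B ∩ M)
    (hA : ∀ μ ∈ A, ⨅ ρ ∈ M, levyProkhorovEDist μ ρ ≤ a →
      ∃ μ' ∈ A', levyProkhorovEDist μ μ' ≤ b)
    (hB : ∀ ν ∈ B, ⨅ ρ ∈ M, levyProkhorovEDist ν ρ ≤ a →
      ∃ ν' ∈ B', levyProkhorovEDist ν ν' ≤ b)
    (hAB : eHausLP A B < a) :
    eHausLP A' B' ≤ a + b := by
  have hcomm : ∀ C D : Set (Measure X), (⨆ ν ∈ D, ⨅ μ ∈ C, levyProkhorovEDist μ ν)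
      = ⨆ ν ∈ D, ⨅ μ ∈ C, levyProkhorovEDist ν μ := fun C D => by
    simp_rw [levyProkhorovEDist_comm]
  rw [eHausLP, hcomm, max_lt_iff] at hAB
  rw [eHausLP, hcomm]
  exact max_le (iSup_iInf_levyProkhorovEDist_le_of_rounding hA' hB hAB.1)
    (iSup_iInf_levyProkhorovEDist_le_of_rounding hB' hA hAB.2)

end Hausdorff

namespace PVar

variable (V : PVar) {k : ℕ}

theorem isProbabilityMeasure_of_mem_Sk {μ : Measure (RE (2 * k + 1))} (hμ : μ ∈ V.Sk k) :
    IsProbabilityMeasure μ := by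
  obtain ⟨f, hf, -, rfl⟩ := hμ
  exact isProbabilityMeasure_smeasure hf V.meas

theorem Sk_nonempty (k : ℕ) : (V.Sk k).Nonempty :=
  ⟨_, fun _ _ => 0, fun _ => measurable_const, fun _ _ => by simp, rfl⟩

theorem Sk'_subset_Sk_inter_Mk (k : ℕ) : V.Sk' k ⊆ V.Sk k ∩ Mk k := by
  rintro μ ⟨f, hf, rfl⟩
  refine ⟨⟨f, hf.1, fun i x => ?_, rfl⟩, smeasure_mem_Mk hf V.meas⟩
  rcases hf.2.1 i x with h | h <;> simp [h]

theorem eHausLP_Sk_le_one (U : PVar) (k : ℕ) : eHausLP (V.Sk k) (U.Sk k) ≤ 1 :=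
  eHausLP_le_one (fun _ => V.isProbabilityMeasure_of_mem_Sk)
    (fun _ => U.isProbabilityMeasure_of_mem_Sk) (V.Sk_nonempty k) (U.Sk_nonempty k)

theorem exists_mem_Sk'_levyProkhorovEDist_le (hk : 0 < k) {ε : ℝ} (hε : 0 < ε)
    {μ : Measure (RE (2 * k + 1))} (hμ : μ ∈ V.Sk k)
    (hclose : ⨅ ν ∈ Mk k, levyProkhorovEDist μ ν ≤ ENNReal.ofReal (ε / (4 * (k + 1)))) :
    ∃ μ₂ ∈ V.Sk' k, levyProkhorovEDist μ μ₂ ≤ ENNReal.ofReal ε := by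
  obtain ⟨f, hf, -, rfl⟩ := hμ
  obtain ⟨g, hg, hfg⟩ :=
    exists_isFunctionPartition_levyProkhorovEDist_le hk hf V.meas (by positivity) hclose
  refine ⟨_, ⟨g, hg, rfl⟩, hfg.trans_eq ?_⟩
  congr 1
  field_simp

end PVar

/-- For each `ε > 0` and `k ≥ 1` there exists `δ > 0` such that:
(i) for every P-variable `W` and every `μ ∈ S_k(W)` with `d_LP(μ, M_k) ≤ δ` there is
`μ₂ ∈ S'_k(W)` with `d_LP(μ, μ₂) ≤ ε`; and (ii) for any two P-variables `W, U` with
`d_H(S_k(W), S_k(U)) ≤ δ/2` one has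
`d_H(S'_k(W), S'_k(U)) ≤ 2ε + d_H(S_k(W), S_k(U))`. -/
theorem exists_delta_partlem :
    ∀ ε > (0 : ℝ), ∀ k : ℕ, 1 ≤ k → ∃ δ > (0 : ℝ),
      (∀ V : PVar.{u₁, u₂}, ∀ μ ∈ V.Sk k,
        (⨅ ν ∈ Mk k, levyProkhorovEDist μ ν) ≤ ENNReal.ofReal δ →
        ∃ μ₂ ∈ V.Sk' k, levyProkhorovDist μ μ₂ ≤ ε) ∧
      (∀ (V : PVar.{u₁, u₂}) (U : PVar.{u₃, u₄}),
        dHLP (V.Sk k) (U.Sk k) ≤ δ / 2 →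
        dHLP (V.Sk' k) (U.Sk' k) ≤ 2 * ε + dHLP (V.Sk k) (U.Sk k)) := by
  intro ε hε k hk
  set δ := ε / (4 * (k + 1))
  have hδ : 0 < δ := by positivity
  have hδε : δ ≤ ε := div_le_self hε.le (by linarith [(Nat.cast_nonneg k : (0 : ℝ) ≤ k)])
  refine ⟨δ, hδ, fun V μ hμ hclose => ?_, fun V U hVU => ?_⟩
  · obtain ⟨μ₂, hμ₂, hd⟩ := V.exists_mem_Sk'_levyProkhorovEDist_le hk hε hμ hclose
    exact ⟨μ₂, hμ₂, ENNReal.toReal_le_of_le_ofReal hε.le hd⟩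
  · -- `dHLP` is `toReal` of `eHausLP`, so the hypothesis says nothing until `eHausLP` is finite.
    have hfin : eHausLP (V.Sk k) (U.Sk k) ≠ ⊤ :=
      ((V.eHausLP_Sk_le_one U k).trans_lt ENNReal.one_lt_top).ne
    have hlt : eHausLP (V.Sk k) (U.Sk k) < ENNReal.ofReal δ :=
      ((ENNReal.le_ofReal_iff_toReal_le hfin (by positivity)).2 hVU).trans_lt
        ((ENNReal.ofReal_lt_ofReal_iff hδ).2 (by linarith))
    have hH := eHausLP_le_of_rounding (V.Sk'_subset_Sk_inter_Mk k) (U.Sk'_subset_Sk_inter_Mk k)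
      (fun μ hμ => V.exists_mem_Sk'_levyProkhorovEDist_le hk hε hμ)
      (fun ν hν => U.exists_mem_Sk'_levyProkhorovEDist_le hk hε hν) hlt
    have : dHLP (V.Sk' k) (U.Sk' k) ≤ δ + ε :=
      ENNReal.toReal_le_of_le_ofReal (by positivity) (hH.trans (ENNReal.ofReal_add hδ.le hε.le).ge)
    have hdH : 0 ≤ dHLP (V.Sk k) (U.Sk k) := ENNReal.toReal_nonneg
    linarith
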